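/- Let F be a commutative perfect semi-field of characteristic 1 satisfying Assumptions 1 and 2 which is Banach, and let ∼ be a non-trivial congruence on F. Then there exists φ ∈ S_E(F) such that for all X, Y ∈ F, X ∼ Y implies φ(X) = φ(Y). -/

import Mathlib

open scoped Pointwise

/-- A commutative perfect semi-field of characteristic `1`: an abelian group `(F, +, 0)`
together with a commutative, associative, idempotent operation `⊕` over which `+`
distributes, and such that `X ↦ n • X` is surjective for every `n > 0`. -/
class CharOneSemifield (F : Type*) extends AddCommGroup F where
  oplus : F → F → F
  oplus_comm : ∀ X Y : F, oplus X Y = oplus Y X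
  oplus_assoc : ∀ X Y Z : F, oplus (oplus X Y) Z = oplus X (oplus Y Z)
  oplus_idem : ∀ X : F, oplus X X = X
  add_oplus : ∀ X Y Z : F, X + oplus Y Z = oplus (X + Y) (X + Z)
  perfect : ∀ n : ℕ, 0 < n → Function.Surjective (fun X : F => n • X)

namespace CharOneSemifield

variable {F : Type*} [CharOneSemifield F]

/-- The canonical partial order on `F`: `X ≤ Y` iff `X ⊕ Y = Y`. -/
def cle (X Y : F) : Prop := oplus X Y = Y

/-- Assumption 1: every element is dominated by (rational multiples of) `E`:
for every `X` there are naturals `a, b` with `b > 0` and `-(a • E) ≤ b • X ≤ a • E`. -/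
def Assumption1 (E : F) : Prop :=
  ∀ X : F, ∃ a b : ℕ, 0 < b ∧ cle (-(a • E)) (b • X) ∧ cle (b • X) (a • E)

/-- `rval E X` is the infimum in `ℝ` of the ratios `a / b` over the pairs of naturals
`(a, b)` with `b > 0` and `-(a • E) ≤ b • X ≤ a • E`. -/
noncomputable def rval (E X : F) : ℝ :=
  sInf {t : ℝ | ∃ a b : ℕ, 0 < b ∧ t = (a : ℝ) / (b : ℝ) ∧
    cle (-(a • E)) (b • X) ∧ cle (b • X) (a • E)}

/-- Assumption 2: `r(X) = 0` implies `X = 0`. -/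
def Assumption2 (E : F) : Prop := ∀ X : F, rval E X = 0 → X = 0

/-- `F` is Banach if it is (sequentially) complete for the metric `(X, Y) ↦ r (X - Y)`. -/
def IsBanach (E : F) : Prop :=
  ∀ u : ℕ → F,
    (∀ ε : ℝ, 0 < ε → ∃ N : ℕ, ∀ m ≥ N, ∀ n ≥ N, rval E (u m - u n) < ε) →
    ∃ L : F, ∀ ε : ℝ, 0 < ε → ∃ N : ℕ, ∀ n ≥ N, rval E (u n - L) < ε

/-- A character of `F`: a map `φ : F → ℝ`, not identically zero, turning `⊕` into `max`
and `+` into `+`. -/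
def IsChar (φ : F → ℝ) : Prop :=
  (∃ X : F, φ X ≠ 0) ∧
  (∀ X Y : F, φ (oplus X Y) = max (φ X) (φ Y)) ∧
  (∀ X Y : F, φ (X + Y) = φ X + φ Y)

/-- The spectrum `S_E(F)`: the set of characters normalized by `φ E = 1`, viewed as a
subset of the product space `F → ℝ` (topology of pointwise convergence). -/
def specE (E : F) : Set (F → ℝ) := {φ : F → ℝ | IsChar φ ∧ φ E = 1}

/-- A congruence on `F`: an equivalence relation compatible with `-`, `+` and `⊕`. -/
structure IsCongruence (r : F → F → Prop) : Prop where
  equiv : Equivalence r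
  neg_compat : ∀ {X Y : F}, r X Y → r (-X) (-Y)
  add_compat : ∀ {X Y : F} (Z : F), r X Y → r (X + Z) (Y + Z)
  oplus_compat : ∀ {X Y : F} (Z : F), r X Y → r (oplus X Z) (oplus Y Z)

/-- A maximal congruence: a non-trivial congruence such that every coarser congruence is
either equal to it or trivial. -/
def IsMaximalCongruence (rel : F → F → Prop) : Prop :=
  IsCongruence rel ∧ (¬ ∀ X Y : F, rel X Y) ∧
  ∀ s : F → F → Prop, IsCongruence s → (∀ X Y : F, rel X Y → s X Y) →
    (∀ X Y : F, s X Y ↔ rel X Y) ∨ (∀ X Y : F, s X Y)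

end CharOneSemifield

open CharOneSemifield

/-!
Through the kernel `{X | X ∼ 0}`, congruences of `F` are the solid subgroups of the
lattice-ordered group `(F, ⊔, +)`, and a non-trivial one does not contain the strong unit `E`.
By Zorn's lemma the kernel lies in a solid subgroup `M` maximal among those avoiding `E`, and
maximality forces `F ⧸ M` to be totally ordered. Hölder's construction
`φ X = inf {a / b | b • X ≤ a • E modulo M}` is then additive, turns `⊔` into `max`, is constant
on the cosets of `M` and takes the value `1` at `E`.
-/

theorem le_add_of_forall_lt_rat {a b c : ℝ} (h : ∀ q r : ℚ, a < q → b < r → c ≤ q + r) :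
    c ≤ a + b := by
  rw [← sub_le_iff_le_add']
  refine le_of_forall_lt_rat_imp_le fun r hr => ?_
  rw [sub_le_comm]
  refine le_of_forall_lt_rat_imp_le fun q hq => ?_
  rw [sub_le_iff_le_add]
  exact h q r hq hr

theorem add_le_of_forall_rat_lt {a b c : ℝ} (h : ∀ q r : ℚ, q < a → r < b → q + r ≤ c) :
    a + b ≤ c := by
  rw [← le_sub_iff_add_le']
  refine le_of_forall_rat_lt_imp_le fun r hr => ?_
  rw [le_sub_comm]
  refine le_of_forall_rat_lt_imp_le fun q hq => ?_
  rw [le_sub_iff_add_le]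
  exact h q r hq hr

theorem Rat.cast_add_eq_div_mul_den (q r : ℚ) :
    ((q + r : ℚ) : ℝ) = ((q.num * r.den + r.num * q.den : ℤ) : ℝ) / ((q.den * r.den : ℕ) : ℝ) := by
  rw [Rat.cast_add, Rat.cast_def q, Rat.cast_def r]
  push_cast
  field_simp

namespace LatticeOrderedAddCommGroup

variable {α : Type*} [Lattice α] [AddCommGroup α]

def IsStrongUnit (e : α) : Prop := ∀ x : α, ∃ n : ℕ, |x| ≤ n • e

theorem IsSolid.eq_top_of_isStrongUnit_mem {M : AddSubgroup α} (hM : IsSolid (M : Set α)) {e : α}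
    (he : IsStrongUnit e) (heM : e ∈ M) : M = ⊤ := by
  refine eq_top_iff.2 fun x _ => ?_
  obtain ⟨n, hn⟩ := he x
  exact hM (M.nsmul_mem heM n) (hn.trans (le_abs_self _))

/-- By `IsSolid.eq_top_of_isStrongUnit_mem`, these are exactly the proper solid subgroups. -/
structure IsSolidAvoiding (M : AddSubgroup α) (e : α) : Prop where
  isSolid : IsSolid (M : Set α)
  isStrongUnit : IsStrongUnit e
  not_mem : e ∉ M

theorem exists_maximal_isSolidAvoiding {K : AddSubgroup α} {e : α} (hK : IsSolidAvoiding K e) :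
    ∃ M, K ≤ M ∧ Maximal (IsSolidAvoiding · e) M := by
  refine zorn_le_nonempty₀ {N | IsSolidAvoiding N e} (fun c hc hchain N hN => ?_) K hK
  have mem_sSup {x : α} : x ∈ sSup c ↔ ∃ N ∈ c, x ∈ N :=
    AddSubgroup.mem_sSup_of_directedOn ⟨N, hN⟩ hchain.directedOn
  refine ⟨sSup c, ⟨fun x hx y hyx => ?_, hK.isStrongUnit, fun he => ?_⟩, fun _ => le_sSup⟩
  · obtain ⟨N, hNc, hxN⟩ := mem_sSup.1 hx
    exact mem_sSup.2 ⟨N, hNc, (hc hNc).isSolid hxN hyx⟩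
  · obtain ⟨N, hNc, heN⟩ := mem_sSup.1 he
    exact (hc hNc).not_mem heN

variable [AddLeftMono α]

theorem inf_add_le_inf_add_inf {a b c : α} (ha : 0 ≤ a) (hb : 0 ≤ b) (hc : 0 ≤ c) :
    a ⊓ (b + c) ≤ a ⊓ b + a ⊓ c := by
  rw [inf_add, add_inf, add_inf]
  refine le_inf (le_inf ?_ ?_) (le_inf ?_ ?_)
  · exact inf_le_left.trans (le_add_of_nonneg_left ha)
  · exact inf_le_left.trans (le_add_of_nonneg_right hc)
  · exact inf_le_left.trans (le_add_of_nonneg_left hb)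
  · exact inf_le_right

theorem inf_nsmul_eq_zero {a b : α} (ha : 0 ≤ a) (hb : 0 ≤ b) (h : a ⊓ b = 0) (n : ℕ) :
    a ⊓ n • b = 0 := by
  induction n with
  | zero => simpa using inf_eq_right.2 ha
  | succ n ih =>
    refine le_antisymm ?_ (le_inf ha (nsmul_nonneg hb _))
    calc a ⊓ (n + 1) • b ≤ a ⊓ n • b + a ⊓ b :=
          succ_nsmul b n ▸ inf_add_le_inf_add_inf ha (nsmul_nonneg hb n) hb
      _ = 0 := by rw [ih, h, add_zero]

theorem nsmul_inf_nsmul_eq_zero {a b : α} (ha : 0 ≤ a) (hb : 0 ≤ b) (h : a ⊓ b = 0)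
    (m n : ℕ) : m • a ⊓ n • b = 0 := by
  have hb' : b ⊓ m • a = 0 := inf_nsmul_eq_zero hb ha (inf_comm a b ▸ h) m
  exact inf_nsmul_eq_zero (nsmul_nonneg ha m) hb (inf_comm b _ ▸ hb') n

theorem posPart_sub_of_inf_eq_zero {a b : α} (h : a ⊓ b = 0) : (a - b)⁺ = a := by
  have hsup : a ⊔ b = a + b := by simpa [h] using inf_add_sup a b
  rw [posPart_def, ← sub_self b, ← sup_sub, hsup, add_sub_cancel_right]

theorem nsmul_posPart (n : ℕ) (x : α) : (n • x)⁺ = n • x⁺ :=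
  calc (n • x)⁺ = (n • x⁺ - n • x⁻)⁺ := by rw [← nsmul_sub, posPart_sub_negPart]
    _ = n • x⁺ := posPart_sub_of_inf_eq_zero <| nsmul_inf_nsmul_eq_zero (posPart_nonneg x)
          (negPart_nonneg x) (posPart_inf_negPart_eq_zero x) n n

theorem nsmul_negPart (n : ℕ) (x : α) : (n • x)⁻ = n • x⁻ := by
  rw [← posPart_neg, ← smul_neg, nsmul_posPart, posPart_neg]

theorem nsmul_abs (n : ℕ) (x : α) : |n • x| = n • |x| := by
  rw [← posPart_add_negPart, nsmul_posPart, nsmul_negPart, ← nsmul_add, posPart_add_negPart]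

theorem nonneg_of_nsmul_nonneg {n : ℕ} {x : α} (hn : n ≠ 0) (h : 0 ≤ n • x) : 0 ≤ x := by
  rw [← negPart_eq_zero, nsmul_negPart] at h
  rw [← negPart_eq_zero]
  exact le_antisymm ((le_self_nsmul (negPart_nonneg x) hn).trans h.le) (negPart_nonneg x)

theorem IsStrongUnit.nonneg {e : α} (he : IsStrongUnit e) : 0 ≤ e := by
  obtain ⟨n, hn⟩ := he e
  refine nonneg_of_nsmul_nonneg n.succ_ne_zero ?_
  rw [succ_nsmul, ← neg_le_iff_add_nonneg]
  exact (neg_le_abs e).trans hn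

theorem posPart_le_abs (x : α) : x⁺ ≤ |x| := sup_le (le_abs_self x) (abs_nonneg x)

theorem negPart_le_abs (x : α) : x⁻ ≤ |x| := sup_le (neg_le_abs x) (abs_nonneg x)

theorem IsSolid.mem_of_nonneg_of_le {M : Set α} (hM : IsSolid M) {x y : α} (hx : 0 ≤ x)
    (hxy : x ≤ y) (hy : y ∈ M) : x ∈ M :=
  hM hy <| by rwa [abs_of_nonneg hx, abs_of_nonneg (hx.trans hxy)]

theorem IsSolid.abs_mem {M : Set α} (hM : IsSolid M) {x : α} (hx : x ∈ M) : |x| ∈ M :=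
  hM hx (abs_abs x).le

theorem IsSolid.posPart_mem {M : Set α} (hM : IsSolid M) {x : α} (hx : x ∈ M) : x⁺ ∈ M :=
  hM.mem_of_nonneg_of_le (posPart_nonneg x) (posPart_le_abs x) (hM.abs_mem hx)

theorem IsSolid.posPart_add_mem {M : AddSubgroup α} (hM : IsSolid (M : Set α)) {u v : α}
    (hu : u⁺ ∈ M) (hv : v⁺ ∈ M) : (u + v)⁺ ∈ M :=
  hM.mem_of_nonneg_of_le (posPart_nonneg _)
    (sup_le (add_le_add (le_posPart u) (le_posPart v))
      (add_nonneg (posPart_nonneg u) (posPart_nonneg v)))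
    (M.add_mem hu hv)

theorem IsSolid.posPart_nsmul_add_nsmul_mem {M : AddSubgroup α} (hM : IsSolid (M : Set α))
    {u v : α} (hu : u⁺ ∈ M) (hv : v⁺ ∈ M) (m n : ℕ) : (m • u + n • v)⁺ ∈ M :=
  hM.posPart_add_mem (nsmul_posPart m u ▸ M.nsmul_mem hu m) (nsmul_posPart n v ▸ M.nsmul_mem hv n)

/-- For solid `M` and `0 ≤ w`, the solid subgroup generated by `M` and `w`. -/
def solidAdjoin (M : AddSubgroup α) (w : α) : AddSubgroup α where
  carrier := {x | ∃ n : ℕ, ∃ m ∈ M, |x| ≤ n • w + m}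
  zero_mem' := ⟨0, 0, M.zero_mem, by simp⟩
  add_mem' := by
    rintro x y ⟨n₁, m₁, hm₁, hx⟩ ⟨n₂, m₂, hm₂, hy⟩
    refine ⟨n₁ + n₂, m₁ + m₂, M.add_mem hm₁ hm₂, ?_⟩
    calc |x + y| ≤ |x| + |y| := abs_add_le x y
      _ ≤ (n₁ • w + m₁) + (n₂ • w + m₂) := add_le_add hx hy
      _ = (n₁ + n₂) • w + (m₁ + m₂) := by rw [add_nsmul]; abel
  neg_mem' := by
    rintro x ⟨n, m, hm, hx⟩
    exact ⟨n, m, hm, by rwa [abs_neg]⟩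

theorem isSolid_solidAdjoin (M : AddSubgroup α) (w : α) : IsSolid (solidAdjoin M w : Set α) :=
  fun _ ⟨n, m, hm, hx⟩ _ hyx => ⟨n, m, hm, hyx.trans hx⟩

theorem le_solidAdjoin {M : AddSubgroup α} (hM : IsSolid (M : Set α)) (w : α) :
    M ≤ solidAdjoin M w :=
  fun x hx => ⟨0, |x|, hM.abs_mem hx, by simp⟩

theorem mem_solidAdjoin_self (M : AddSubgroup α) {w : α} (hw : 0 ≤ w) : w ∈ solidAdjoin M w :=
  ⟨1, 0, M.zero_mem, by simp [abs_of_nonneg hw]⟩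

theorem Maximal.posPart_mem_or_negPart_mem {M : AddSubgroup α} {e : α}
    (hM : Maximal (IsSolidAvoiding · e) M) (z : α) : z⁺ ∈ M ∨ z⁻ ∈ M := by
  have bound {w : α} (hw : 0 ≤ w) (hwM : w ∉ M) : ∃ n : ℕ, ∃ m ∈ M, |e| ≤ n • w + m := by
    by_contra h
    have hadj : IsSolidAvoiding (solidAdjoin M w) e :=
      ⟨isSolid_solidAdjoin M w, hM.1.isStrongUnit, h⟩
    exact hwM (hM.2 hadj (le_solidAdjoin hM.1.isSolid w) (mem_solidAdjoin_self M hw))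
  -- Otherwise, modulo `M`, `|e|` is bounded by multiples of both `z⁺` and `z⁻`, whose meet is `0`.
  by_contra! hz
  obtain ⟨n₁, m₁, hm₁, h₁⟩ := bound (posPart_nonneg z) hz.1
  obtain ⟨n₂, m₂, hm₂, h₂⟩ := bound (negPart_nonneg z) hz.2
  set n := n₁ + n₂
  set m := |m₁| + |m₂|
  have hm : m ∈ M := M.add_mem (hM.1.isSolid.abs_mem hm₁) (hM.1.isSolid.abs_mem hm₂)
  have h₁' : |e| ≤ n • z⁺ + m := h₁.trans <| add_le_add
    (nsmul_le_nsmul_left (posPart_nonneg z) (Nat.le_add_right n₁ n₂))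
    ((le_abs_self m₁).trans (le_add_of_nonneg_right (abs_nonneg m₂)))
  have h₂' : |e| ≤ n • z⁻ + m := h₂.trans <| add_le_add
    (nsmul_le_nsmul_left (negPart_nonneg z) (Nat.le_add_left n₂ n₁))
    ((le_abs_self m₂).trans (le_add_of_nonneg_left (abs_nonneg m₁)))
  have hem : |e| ≤ m := by
    simpa [← inf_add, nsmul_inf_nsmul_eq_zero (posPart_nonneg z) (negPart_nonneg z)
      (posPart_inf_negPart_eq_zero z)] using le_inf h₁' h₂'
  exact hM.1.not_mem (hM.1.isSolid hm (hem.trans (le_abs_self m)))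

/-- The ratios `a / b` with `b • x ≤ a • e` modulo `M`. -/
def upperRatios (M : AddSubgroup α) (e x : α) : Set ℝ :=
  {t | ∃ (a : ℤ) (b : ℕ), 0 < b ∧ t = a / b ∧ (b • x - a • e)⁺ ∈ M}

/-- Hölder's embedding of the totally ordered quotient by `M` into `ℝ`, normalized at `e`. -/
noncomputable def holderFun (M : AddSubgroup α) (e x : α) : ℝ :=
  sInf (upperRatios M e x)

namespace IsSolidAvoiding

variable {M : AddSubgroup α} {e : α}

theorem nonpos_of_posPart_zsmul_mem (h : IsSolidAvoiding M e) {k : ℤ} (hk : (k • e)⁺ ∈ M) :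
    k ≤ 0 := by
  by_contra! hk0
  obtain ⟨n, rfl⟩ := Int.eq_ofNat_of_zero_le hk0.le
  have hn : n ≠ 0 := by exact_mod_cast hk0.ne'
  have he : 0 ≤ e := h.isStrongUnit.nonneg
  rw [natCast_zsmul, posPart_eq_self.2 (nsmul_nonneg he n)] at hk
  exact h.not_mem (h.isSolid.mem_of_nonneg_of_le he (le_self_nsmul he hn) hk)

theorem ratio_le_ratio (h : IsSolidAvoiding M e) {x : α} {a c : ℤ} {b d : ℕ} (hb : 0 < b)
    (hd : 0 < d) (hlow : (c • e - d • x)⁺ ∈ M) (hup : (b • x - a • e)⁺ ∈ M) :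
    (c : ℝ) / d ≤ a / b := by
  have hcomb : d • (b • x - a • e) + b • (c • e - d • x) = (b * c - d * a : ℤ) • e := by
    module
  have hmem := h.isSolid.posPart_nsmul_add_nsmul_mem hup hlow d b
  rw [hcomb] at hmem
  rw [div_le_div_iff₀ (by exact_mod_cast hd) (by exact_mod_cast hb)]
  exact_mod_cast (by linarith [h.nonpos_of_posPart_zsmul_mem hmem] : c * (b : ℤ) ≤ a * d)

theorem upperRatios_nonempty (h : IsSolidAvoiding M e) (x : α) :
    (upperRatios M e x).Nonempty := by
  obtain ⟨n, hn⟩ := h.isStrongUnit x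
  refine ⟨n, n, 1, one_pos, by simp, ?_⟩
  rw [posPart_eq_zero.2 (by simpa using (le_abs_self x).trans hn)]
  exact M.zero_mem

theorem upperRatios_bddBelow (h : IsSolidAvoiding M e) (x : α) :
    BddBelow (upperRatios M e x) := by
  obtain ⟨n, hn⟩ := h.isStrongUnit x
  have hlow : ((-n : ℤ) • e - (1 : ℕ) • x)⁺ ∈ M := by
    rw [posPart_eq_zero.2 (by simpa using neg_le.1 ((neg_le_abs x).trans hn))]
    exact M.zero_mem
  refine ⟨-n, ?_⟩
  rintro t ⟨a, b, hb, rfl, hup⟩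
  simpa using h.ratio_le_ratio hb one_pos hlow hup

theorem holderFun_le (h : IsSolidAvoiding M e) {x : α} {a : ℤ} {b : ℕ} (hb : 0 < b)
    (hup : (b • x - a • e)⁺ ∈ M) : holderFun M e x ≤ a / b :=
  csInf_le (h.upperRatios_bddBelow x) ⟨a, b, hb, rfl, hup⟩

theorem le_holderFun (h : IsSolidAvoiding M e) {x : α} {c : ℤ} {d : ℕ} (hd : 0 < d)
    (hlow : (c • e - d • x)⁺ ∈ M) : (c : ℝ) / d ≤ holderFun M e x :=
  le_csInf (h.upperRatios_nonempty x) fun _ ⟨_, _, hb, ht, hup⟩ =>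
    ht ▸ h.ratio_le_ratio hb hd hlow hup

theorem holderFun_mono (h : IsSolidAvoiding M e) {x y : α} (hxy : (x - y)⁺ ∈ M) :
    holderFun M e x ≤ holderFun M e y := by
  refine le_csInf (h.upperRatios_nonempty y) fun _ ⟨a, b, hb, ht, hup⟩ => ht ▸ h.holderFun_le hb ?_
  have hmem := h.isSolid.posPart_nsmul_add_nsmul_mem hxy hup b 1
  rwa [one_nsmul, nsmul_sub, sub_add_sub_cancel] at hmem

theorem holderFun_mono_of_le (h : IsSolidAvoiding M e) {x y : α} (hxy : x ≤ y) :
    holderFun M e x ≤ holderFun M e y :=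
  h.holderFun_mono (by rw [posPart_eq_zero.2 (sub_nonpos.2 hxy)]; exact M.zero_mem)

theorem holderFun_eq_of_sub_mem (h : IsSolidAvoiding M e) {x y : α} (hxy : x - y ∈ M) :
    holderFun M e x = holderFun M e y :=
  le_antisymm (h.holderFun_mono (h.isSolid.posPart_mem hxy))
    (h.holderFun_mono (h.isSolid.posPart_mem (neg_sub x y ▸ M.neg_mem hxy)))

theorem holderFun_self (h : IsSolidAvoiding M e) : holderFun M e e = 1 := by
  have hle := h.holderFun_le (x := e) (a := 1) one_pos (by simp)
  have hge := h.le_holderFun (x := e) (c := 1) one_pos (by simp)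
  norm_num at hle hge
  exact le_antisymm hle hge

theorem posPart_sub_mem_of_lt_holderFun (h : IsSolidAvoiding M e)
    (hp : ∀ z : α, z⁺ ∈ M ∨ z⁻ ∈ M) {x : α} {q : ℚ} (hq : q < holderFun M e x) :
    (q.num • e - q.den • x)⁺ ∈ M := by
  rcases hp (q.den • x - q.num • e) with hup | hlow
  · have := h.holderFun_le q.pos hup
    rw [← Rat.cast_def] at this
    exact absurd hq this.not_gt
  · rwa [← posPart_neg, neg_sub] at hlow

theorem posPart_sub_mem_of_holderFun_lt (h : IsSolidAvoiding M e)
    (hp : ∀ z : α, z⁺ ∈ M ∨ z⁻ ∈ M) {x : α} {q : ℚ} (hq : holderFun M e x < q) :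
    (q.den • x - q.num • e)⁺ ∈ M := by
  rcases hp (q.num • e - q.den • x) with hlow | hup
  · have := h.le_holderFun q.pos hlow
    rw [← Rat.cast_def] at this
    exact absurd hq this.not_gt
  · rwa [← posPart_neg, neg_sub] at hup

theorem holderFun_add (h : IsSolidAvoiding M e) (hp : ∀ z : α, z⁺ ∈ M ∨ z⁻ ∈ M) (x y : α) :
    holderFun M e (x + y) = holderFun M e x + holderFun M e y := by
  refine le_antisymm (le_add_of_forall_lt_rat fun q r hq hr => ?_)
    (add_le_of_forall_rat_lt fun q r hq hr => ?_)
  · have hmem := h.isSolid.posPart_nsmul_add_nsmul_mem (h.posPart_sub_mem_of_holderFun_lt hp hq)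
      (h.posPart_sub_mem_of_holderFun_lt hp hr) r.den q.den
    rw [← Rat.cast_add, Rat.cast_add_eq_div_mul_den]
    refine h.holderFun_le (mul_pos q.pos r.pos) ?_
    convert hmem using 2
    module
  · have hmem := h.isSolid.posPart_nsmul_add_nsmul_mem (h.posPart_sub_mem_of_lt_holderFun hp hq)
      (h.posPart_sub_mem_of_lt_holderFun hp hr) r.den q.den
    rw [← Rat.cast_add, Rat.cast_add_eq_div_mul_den]
    refine h.le_holderFun (mul_pos q.pos r.pos) ?_
    convert hmem using 2
    module

theorem holderFun_sup (h : IsSolidAvoiding M e) (hp : ∀ z : α, z⁺ ∈ M ∨ z⁻ ∈ M) (x y : α) :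
    holderFun M e (x ⊔ y) = max (holderFun M e x) (holderFun M e y) := by
  have sup_le_right {x y : α} (hxy : (x - y)⁺ ∈ M) : holderFun M e (x ⊔ y) ≤ holderFun M e y := by
    refine h.holderFun_mono ?_
    rwa [sup_sub, sub_self, ← posPart_def, posPart_eq_self.2 (posPart_nonneg _)]
  refine le_antisymm ?_ (max_le (h.holderFun_mono_of_le le_sup_left)
    (h.holderFun_mono_of_le le_sup_right))
  rcases hp (x - y) with hxy | hyx
  · exact (sup_le_right hxy).trans (le_max_right _ _)
  · rw [← posPart_neg, neg_sub] at hyx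
    exact sup_comm x y ▸ (sup_le_right hyx).trans (le_max_left _ _)

end IsSolidAvoiding

end LatticeOrderedAddCommGroup

open LatticeOrderedAddCommGroup

namespace CharOneSemifield

variable {F : Type*} [CharOneSemifield F]

instance : Max F := ⟨oplus⟩

/-- The order of `SemilatticeSup.mk'` is `X ⊔ Y = Y`, so `X ≤ Y` unfolds to `cle X Y`. -/
instance : SemilatticeSup F := SemilatticeSup.mk' oplus_comm oplus_assoc oplus_idem

instance : IsOrderedAddMonoid F where
  add_le_add_left X Y (h : X ⊔ Y = Y) Z := show (X + Z) ⊔ (Y + Z) = Y + Z by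
    rw [add_comm X, add_comm Y]
    exact (add_oplus Z X Y).symm.trans (congrArg (Z + ·) h)

instance : Lattice F where
  inf X Y := -(-X ⊔ -Y)
  inf_le_left _ _ := neg_le.2 le_sup_left
  inf_le_right _ _ := neg_le.2 le_sup_right
  le_inf _ _ _ hY hZ := le_neg.2 (sup_le (neg_le_neg hY) (neg_le_neg hZ))

theorem Assumption1.isStrongUnit {E : F} (h1 : Assumption1 E) : IsStrongUnit E := fun X => by
  obtain ⟨a, b, hb, hl, hu⟩ := h1 X
  refine ⟨a, ?_⟩
  calc |X| ≤ b • |X| := le_self_nsmul (abs_nonneg X) hb.ne'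
    _ = |b • X| := (nsmul_abs b X).symm
    _ ≤ a • E := abs_le'.2 ⟨hu, neg_le.1 hl⟩

namespace IsCongruence

variable {rel : F → F → Prop}

def kernel (hc : IsCongruence rel) : AddSubgroup F where
  carrier := {X | rel X 0}
  zero_mem' := hc.equiv.refl 0
  add_mem' {X Y} hX hY := hc.equiv.trans (by simpa using hc.add_compat Y hX) hY
  neg_mem' hX := by simpa using hc.neg_compat hX

theorem sub_mem_kernel_iff (hc : IsCongruence rel) {X Y : F} :
    X - Y ∈ hc.kernel ↔ rel X Y :=
  ⟨fun h => by simpa using hc.add_compat Y h,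
    fun h => show rel (X - Y) 0 by simpa [← sub_eq_add_neg] using hc.add_compat (-Y) h⟩

theorem isSolid_kernel (hc : IsCongruence rel) : IsSolid (hc.kernel : Set F) := by
  have posPart_mem {X : F} (hX : X ∈ hc.kernel) : X⁺ ∈ hc.kernel := by
    have h := hc.oplus_compat 0 hX
    rwa [oplus_idem] at h
  have mem_of_le {U V : F} (hU : 0 ≤ U) (hUV : U ≤ V) (hV : V ∈ hc.kernel) : U ∈ hc.kernel := by
    have h : rel (V ⊔ U) (0 ⊔ U) := hc.oplus_compat U hV
    rw [sup_eq_left.2 hUV, sup_eq_right.2 hU] at h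
    exact hc.equiv.trans (hc.equiv.symm h) hV
  intro X hX Y hYX
  have habs : |X| ∈ hc.kernel := posPart_add_negPart X ▸
    hc.kernel.add_mem (posPart_mem hX) (posPart_neg X ▸ posPart_mem (hc.kernel.neg_mem hX))
  have hpos : Y⁺ ∈ hc.kernel := mem_of_le (posPart_nonneg Y) ((posPart_le_abs Y).trans hYX) habs
  have hneg : Y⁻ ∈ hc.kernel := mem_of_le (negPart_nonneg Y) ((negPart_le_abs Y).trans hYX) habs
  simpa using hc.kernel.sub_mem hpos hneg

end IsCongruence

end CharOneSemifield

theorem stmt18_general {F : Type*} [CharOneSemifield F] (E : F)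
    (h1 : Assumption1 E)
    (rel : F → F → Prop) (hc : IsCongruence rel) (hnt : ¬ ∀ X Y : F, rel X Y) :
    ∃ φ ∈ specE E, ∀ X Y : F, rel X Y → φ X = φ Y := by
  have hE : E ∉ hc.kernel := fun hE => hnt fun X Y => hc.sub_mem_kernel_iff.1 <| by
    rw [hc.isSolid_kernel.eq_top_of_isStrongUnit_mem h1.isStrongUnit hE]
    trivial
  obtain ⟨M, hKM, hM⟩ := exists_maximal_isSolidAvoiding ⟨hc.isSolid_kernel, h1.isStrongUnit, hE⟩
  have hp := hM.posPart_mem_or_negPart_mem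
  have hφE : holderFun M E E = 1 := hM.1.holderFun_self
  refine ⟨holderFun M E, ⟨⟨⟨E, hφE ▸ one_ne_zero⟩, hM.1.holderFun_sup hp, hM.1.holderFun_add hp⟩,
    hφE⟩, fun X Y hXY => hM.1.holderFun_eq_of_sub_mem (hKM (hc.sub_mem_kernel_iff.2 hXY))⟩

/-- for every non-trivial congruence `∼` on a Banach semi-field there is
`φ ∈ S_E(F)` with `X ∼ Y → φ X = φ Y`. -/
theorem stmt18 {F : Type*} [CharOneSemifield F] (E : F)
    (h1 : Assumption1 E) (h2 : Assumption2 E) (hB : IsBanach E)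
    (rel : F → F → Prop) (hc : IsCongruence rel) (hnt : ¬ ∀ X Y : F, rel X Y) :
    ∃ φ ∈ specE E, ∀ X Y : F, rel X Y → φ X = φ Y :=
  stmt18_general E h1 rel hc hnt
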